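/- Let (M^n,g) be an Einstein manifold with constant μ and p ∈ M. Let K_min and K_max be the minimum and maximum of the sectional curvature at p. Then the fiberwise supremum r(p) of ⟨R̊η,η⟩/|η|² over nonzero trace-free symmetric 2-tensors at p satisfies r(p) ≤ min{(n−2)K_max − μ, μ − n·K_min}. -/
import Mathlib


open scoped RealInnerProductSpace

variable {V : Type*} [NormedAddCommGroup V] [InnerProductSpace ℝ V] [FiniteDimensional ℝ V]

/-- The quadratic form `η ↦ ⟨R̊η, η⟩` of the curvature action
`R̊η(X,Y) = ∑ₖ η(R_{eₖ,X}Y, eₖ)` at a point, computed in the standard orthonormal basis;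
here `η` is viewed as a symmetric endomorphism of the tangent space via the metric. -/
noncomputable def curvQuad (R : V →ₗ[ℝ] V →ₗ[ℝ] V →ₗ[ℝ] V) (η : V →ₗ[ℝ] V) : ℝ :=
  ∑ i, ∑ j,
    (∑ k, ⟪η (R (stdOrthonormalBasis ℝ V k) (stdOrthonormalBasis ℝ V i)
        (stdOrthonormalBasis ℝ V j)), stdOrthonormalBasis ℝ V k⟫) *
      ⟪η (stdOrthonormalBasis ℝ V i), stdOrthonormalBasis ℝ V j⟫

/-- The pointwise squared norm `|η|²` of a symmetric 2-tensor. -/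
noncomputable def endoNormSq (η : V →ₗ[ℝ] V) : ℝ :=
  ∑ i, ∑ j, ⟪η (stdOrthonormalBasis ℝ V i), stdOrthonormalBasis ℝ V j⟫ ^ 2

/-- Application of a trilinear curvature-type map in its first slot, as a linear map. -/
noncomputable def slot1 (R : V →ₗ[ℝ] V →ₗ[ℝ] V →ₗ[ℝ] V) (x y : V) : V →ₗ[ℝ] V where
  toFun v := R v x y
  map_add' a b := by simp
  map_smul' c a := by simp

@[simp] lemma slot1_apply (R : V →ₗ[ℝ] V →ₗ[ℝ] V →ₗ[ℝ] V) (x y v : V) :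
    slot1 R x y v = R v x y := rfl

lemma sum_inner_map_base {ι κ : Type*} [Fintype ι] [Fintype κ]
    (b : OrthonormalBasis ι ℝ V) (c : OrthonormalBasis κ ℝ V) (A B : V →ₗ[ℝ] V) :
    ∑ i, ⟪A (b i), B (b i)⟫ =
      ∑ j, ⟪(LinearMap.adjoint B) (c j), (LinearMap.adjoint A) (c j)⟫ := by
  calc ∑ i, ⟪A (b i), B (b i)⟫
      = ∑ i, ∑ j, ⟪A (b i), c j⟫ * ⟪c j, B (b i)⟫ := by
        simp_rw [c.sum_inner_mul_inner]
    _ = ∑ j, ∑ i, ⟪(LinearMap.adjoint B) (c j), b i⟫ * ⟪b i, (LinearMap.adjoint A) (c j)⟫ := by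
        rw [Finset.sum_comm]
        refine Finset.sum_congr rfl fun j _ => Finset.sum_congr rfl fun i _ => ?_
        rw [LinearMap.adjoint_inner_left, LinearMap.adjoint_inner_right, mul_comm]
    _ = ∑ j, ⟪(LinearMap.adjoint B) (c j), (LinearMap.adjoint A) (c j)⟫ := by
        simp_rw [b.sum_inner_mul_inner]

/-- A sum `∑ᵢ ⟪A bᵢ, B bᵢ⟫` over an orthonormal basis does not depend on the basis. -/
lemma sum_inner_map_eq {ι κ : Type*} [Fintype ι] [Fintype κ]
    (b : OrthonormalBasis ι ℝ V) (c : OrthonormalBasis κ ℝ V) (A B : V →ₗ[ℝ] V) :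
    ∑ i, ⟪A (b i), B (b i)⟫ = ∑ j, ⟪A (c j), B (c j)⟫ :=
  (sum_inner_map_base b c A B).trans (sum_inner_map_base c c A B).symm

/-- The purely algebraic core of Fujitani's estimate. -/
lemma fujitani_algebra (n : ℕ) (μ Kmin Kmax : ℝ) (K : Fin n → Fin n → ℝ) (lam : Fin n → ℝ)
    (hK0 : ∀ i, K i i = 0)
    (hKs : ∀ i j, K i j = K j i)
    (hmin : ∀ i j, i ≠ j → Kmin ≤ K i j)
    (hmax : ∀ i j, i ≠ j → K i j ≤ Kmax)
    (hrow : ∀ i, ∑ j, K i j = μ)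
    (hl : ∑ i, lam i = 0) :
    ∑ i, ∑ j, (lam i * lam j) * K i j ≤
      min (((n : ℝ) - 2) * Kmax - μ) (μ - (n : ℝ) * Kmin) * ∑ i, lam i ^ 2 := by
  set Q : ℝ := ∑ i, lam i ^ 2 with hQ
  have hQ0 : 0 ≤ Q := Finset.sum_nonneg fun i _ => sq_nonneg _
  have hA : ∑ i, ∑ j, K i j * lam i ^ 2 = μ * Q := by
    rw [hQ, Finset.mul_sum]
    refine Finset.sum_congr rfl fun i _ => ?_
    rw [← Finset.sum_mul, hrow i]
  have hB : ∑ i, ∑ j, K i j * lam j ^ 2 = μ * Q := by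
    rw [Finset.sum_comm]
    rw [hQ, Finset.mul_sum]
    refine Finset.sum_congr rfl fun j _ => ?_
    have : ∑ i, K i j * lam j ^ 2 = ∑ i, K j i * lam j ^ 2 :=
      Finset.sum_congr rfl fun i _ => by rw [hKs]
    rw [this, ← Finset.sum_mul, hrow j]
  have hinnerSub : ∀ i, ∑ j, (lam i - lam j) ^ 2 = (n : ℝ) * lam i ^ 2 + Q := by
    intro i
    have h : ∀ j, (lam i - lam j) ^ 2 = lam i ^ 2 + (lam j ^ 2 - (2 * lam i) * lam j) := by
      intro j; ring
    rw [Finset.sum_congr rfl fun j _ => h j, Finset.sum_add_distrib, Finset.sum_sub_distrib,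
      ← Finset.mul_sum, hl, ← hQ, Finset.sum_const, Finset.card_univ, Fintype.card_fin,
      nsmul_eq_mul]
    ring
  have hinnerAdd : ∀ i, ∑ j, (lam i + lam j) ^ 2 = (n : ℝ) * lam i ^ 2 + Q := by
    intro i
    have h : ∀ j, (lam i + lam j) ^ 2 = lam i ^ 2 + (lam j ^ 2 + (2 * lam i) * lam j) := by
      intro j; ring
    rw [Finset.sum_congr rfl fun j _ => h j, Finset.sum_add_distrib, Finset.sum_add_distrib,
      ← Finset.mul_sum, hl, ← hQ, Finset.sum_const, Finset.card_univ, Fintype.card_fin,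
      nsmul_eq_mul]
    ring
  have houter : ∑ i, ((n : ℝ) * lam i ^ 2 + Q) = 2 * n * Q := by
    rw [Finset.sum_add_distrib, ← Finset.mul_sum, ← hQ, Finset.sum_const, Finset.card_univ,
      Fintype.card_fin, nsmul_eq_mul]
    ring
  have hsumSub : ∑ i, ∑ j, (lam i - lam j) ^ 2 = 2 * n * Q :=
    (Finset.sum_congr rfl fun i _ => hinnerSub i).trans houter
  have hsumAdd : ∑ i, ∑ j, (lam i + lam j) ^ 2 = 2 * n * Q :=
    (Finset.sum_congr rfl fun i _ => hinnerAdd i).trans houter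
  -- first bound : S ≤ (μ - n Kmin) Q
  have bound1 : ∑ i, ∑ j, (lam i * lam j) * K i j ≤ (μ - (n : ℝ) * Kmin) * Q := by
    have hid : ∑ i, ∑ j, (lam i * lam j) * K i j
        = μ * Q - (1/2) * ∑ i, ∑ j, K i j * (lam i - lam j) ^ 2 := by
      have expand : ∀ i j, K i j * (lam i - lam j) ^ 2
          = K i j * lam i ^ 2 + K i j * lam j ^ 2 - 2 * ((lam i * lam j) * K i j) := by
        intro i j; ring
      have : ∑ i, ∑ j, K i j * (lam i - lam j) ^ 2
          = μ * Q + μ * Q - 2 * ∑ i, ∑ j, (lam i * lam j) * K i j := by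
        simp_rw [expand, Finset.sum_sub_distrib, Finset.sum_add_distrib, ← Finset.mul_sum]
        rw [hA, hB]
      rw [this]; ring
    have hT : Kmin * (2 * n * Q) ≤ ∑ i, ∑ j, K i j * (lam i - lam j) ^ 2 := by
      calc Kmin * (2 * n * Q) = ∑ i, ∑ j, Kmin * (lam i - lam j) ^ 2 := by
            simp_rw [← Finset.mul_sum]; rw [hsumSub]
        _ ≤ ∑ i, ∑ j, K i j * (lam i - lam j) ^ 2 := by
            refine Finset.sum_le_sum fun i _ => Finset.sum_le_sum fun j _ => ?_
            rcases eq_or_ne i j with rfl | hij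
            · simp
            · exact mul_le_mul_of_nonneg_right (hmin i j hij) (sq_nonneg _)
    rw [hid]; linarith
  -- second bound : S ≤ ((n-2) Kmax - μ) Q
  have bound2 : ∑ i, ∑ j, (lam i * lam j) * K i j ≤ (((n : ℝ) - 2) * Kmax - μ) * Q := by
    have hid : ∑ i, ∑ j, (lam i * lam j) * K i j
        = (1/2) * ∑ i, ∑ j, K i j * (lam i + lam j) ^ 2 - μ * Q := by
      have expand : ∀ i j, K i j * (lam i + lam j) ^ 2
          = K i j * lam i ^ 2 + K i j * lam j ^ 2 + 2 * ((lam i * lam j) * K i j) := by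
        intro i j; ring
      have : ∑ i, ∑ j, K i j * (lam i + lam j) ^ 2
          = μ * Q + μ * Q + 2 * ∑ i, ∑ j, (lam i * lam j) * K i j := by
        simp_rw [expand, Finset.sum_add_distrib, ← Finset.mul_sum]
        rw [hA, hB]
      rw [this]; ring
    have hT : ∑ i, ∑ j, K i j * (lam i + lam j) ^ 2
        ≤ Kmax * (2 * n * Q) - 4 * Kmax * Q := by
      have step : ∑ i, ∑ j, K i j * (lam i + lam j) ^ 2
          ≤ ∑ i, ∑ j, (Kmax * (lam i + lam j) ^ 2
              - if i = j then Kmax * (lam i + lam j) ^ 2 else 0) := by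
        refine Finset.sum_le_sum fun i _ => Finset.sum_le_sum fun j _ => ?_
        rcases eq_or_ne i j with rfl | hij
        · simp [hK0 i]
        · simp only [if_neg hij, sub_zero]
          exact mul_le_mul_of_nonneg_right (hmax i j hij) (sq_nonneg _)
      have hsum1 : ∑ i, ∑ j, Kmax * (lam i + lam j) ^ 2 = Kmax * (2 * n * Q) := by
        simp_rw [← Finset.mul_sum]; rw [hsumAdd]
      have hsum2 : ∑ i : Fin n, ∑ j : Fin n, (if i = j then Kmax * (lam i + lam j) ^ 2 else 0)
          = 4 * Kmax * Q := by
        have h : ∀ i : Fin n, ∑ j : Fin n, (if i = j then Kmax * (lam i + lam j) ^ 2 else 0)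
            = Kmax * (lam i + lam i) ^ 2 := by
          intro i
          rw [Finset.sum_ite_eq Finset.univ i (fun j => Kmax * (lam i + lam j) ^ 2)]
          simp
        simp_rw [h]
        rw [hQ, Finset.mul_sum]
        refine Finset.sum_congr rfl fun i _ => by ring
      calc ∑ i, ∑ j, K i j * (lam i + lam j) ^ 2
          ≤ ∑ i, ∑ j, (Kmax * (lam i + lam j) ^ 2
              - if i = j then Kmax * (lam i + lam j) ^ 2 else 0) := step
        _ = Kmax * (2 * n * Q) - 4 * Kmax * Q := by
            simp_rw [Finset.sum_sub_distrib]
            rw [hsum1, hsum2]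
    rw [hid]; linarith
  rcases le_total (((n : ℝ) - 2) * Kmax - μ) (μ - (n : ℝ) * Kmin) with h | h
  · rw [min_eq_left h]; exact bound2
  · rw [min_eq_right h]; exact bound1

/-- Lemma `fujitani`, estimate (4.3).  Let `(Mⁿ,g)` be Einstein with
constant `μ` and `p ∈ M`; let `K_min` and `K_max` bound the sectional curvature at `p`
from below and above.  Then every trace-free symmetric 2-tensor `η` at `p` satisfies
`⟨R̊η, η⟩ ≤ min{(n−2)K_max − μ, μ − n·K_min} · |η|²`; that is,
`r(p) ≤ min{(n−2)K_max − μ, μ − n·K_min}`. -/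
theorem curvQuad_le (R : V →ₗ[ℝ] V →ₗ[ℝ] V →ₗ[ℝ] V)
    (hanti : ∀ x y z, R x y z = - R y x z)
    (hpair : ∀ x y z w, ⟪R x y z, w⟫ = ⟪R z w x, y⟫)
    (μ Kmin Kmax : ℝ) (n : ℕ) (hn : Module.finrank ℝ V = n)
    (hEin : ∀ x y : V,
      (∑ k, ⟪R (stdOrthonormalBasis ℝ V k) x y, stdOrthonormalBasis ℝ V k⟫) = μ * ⟪x, y⟫)
    (hKmin : ∀ x y : V, ‖x‖ = 1 → ‖y‖ = 1 → ⟪x, y⟫ = 0 → Kmin ≤ ⟪R x y y, x⟫)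
    (hKmax : ∀ x y : V, ‖x‖ = 1 → ‖y‖ = 1 → ⟪x, y⟫ = 0 → ⟪R x y y, x⟫ ≤ Kmax)
    (η : V →ₗ[ℝ] V)
    (hηsymm : ∀ x y, ⟪η x, y⟫ = ⟪x, η y⟫)
    (hηtr : LinearMap.trace ℝ V η = 0) :
    curvQuad R η ≤ min (((n : ℝ) - 2) * Kmax - μ) (μ - (n : ℝ) * Kmin) * endoNormSq η := by
  classical
  set e := stdOrthonormalBasis ℝ V with he
  have hη : η.IsSymmetric := fun x y => hηsymm x y
  set b := hη.eigenvectorBasis hn with hbdef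
  set lam := hη.eigenvalues hn with hlamdef
  have hb : ∀ i, η (b i) = lam i • b i := fun i => hη.apply_eigenvectorBasis hn i
  have hbnorm : ∀ i, ‖b i‖ = 1 := fun i => b.orthonormal.1 i
  have hbinner : ∀ i j, i ≠ j → ⟪b i, b j⟫ = 0 := fun i j hij => b.orthonormal.2 hij
  have hbself : ∀ i, ⟪b i, b i⟫ = (1 : ℝ) := by
    intro i
    rw [real_inner_self_eq_norm_sq, hbnorm i]; norm_num
  set K : Fin n → Fin n → ℝ := fun i j => ⟪R (b i) (b j) (b j), b i⟫ with hKdef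
  -- Einstein condition in the eigenbasis
  have hEinb : ∀ x y : V, ∑ k, ⟪R (b k) x y, b k⟫ = μ * ⟪x, y⟫ := by
    intro x y
    have h := sum_inner_map_eq b e (slot1 R x y) (LinearMap.id)
    simp only [slot1_apply, LinearMap.id_apply] at h
    exact h.trans (hEin x y)
  have hK0 : ∀ i, K i i = 0 := by
    intro i
    have h0 : R (b i) (b i) (b i) = 0 := by
      have h := hanti (b i) (b i) (b i)
      have h2 : (2 : ℝ) • R (b i) (b i) (b i) = 0 := by
        rw [two_smul]
        nth_rewrite 2 [h]
        simp
      exact (smul_eq_zero.mp h2).resolve_left (by norm_num)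
    simp [hKdef, h0]
  have hKs : ∀ i j, K i j = K j i := fun i j => hpair (b i) (b j) (b j) (b i)
  have hmin : ∀ i j, i ≠ j → Kmin ≤ K i j := fun i j hij =>
    hKmin (b i) (b j) (hbnorm i) (hbnorm j) (hbinner i j hij)
  have hmax : ∀ i j, i ≠ j → K i j ≤ Kmax := fun i j hij =>
    hKmax (b i) (b j) (hbnorm i) (hbnorm j) (hbinner i j hij)
  have hrow : ∀ i, ∑ j, K i j = μ := by
    intro i
    have h1 : ∑ j, K j i = μ := by
      have h := hEinb (b i) (b i)
      rw [hbself i, mul_one] at h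
      exact h
    calc ∑ j, K i j = ∑ j, K j i := Finset.sum_congr rfl fun j _ => hKs i j
      _ = μ := h1
  -- trace-free condition in terms of eigenvalues
  have hl : ∑ i, lam i = 0 := by
    have htr : LinearMap.trace ℝ V η = ∑ i, lam i := by
      rw [LinearMap.trace_eq_matrix_trace ℝ b.toBasis η, Matrix.trace]
      refine Finset.sum_congr rfl fun i _ => ?_
      rw [Matrix.diag_apply, LinearMap.toMatrix_apply, OrthonormalBasis.coe_toBasis, hb i,
        map_smul]
      simp
    rw [← htr, hηtr]
  -- norm of η in terms of eigenvalues
  have hns : endoNormSq η = ∑ i, lam i ^ 2 := by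
    rw [endoNormSq]
    have h1 : ∀ i, ∑ j, ⟪η (e i), e j⟫ ^ 2 = ⟪η (e i), η (e i)⟫ := by
      intro i
      have h : ∀ j, ⟪η (e i), e j⟫ ^ 2 = ⟪η (e i), e j⟫ * ⟪e j, η (e i)⟫ := by
        intro j; rw [sq, real_inner_comm (e j)]
      simp_rw [h, e.sum_inner_mul_inner]
    calc ∑ i, ∑ j, ⟪η (e i), e j⟫ ^ 2 = ∑ i, ⟪η (e i), η (e i)⟫ :=
          Finset.sum_congr rfl fun i _ => h1 i
      _ = ∑ i, ⟪η (b i), η (b i)⟫ := sum_inner_map_eq e b η η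
      _ = ∑ i, lam i ^ 2 := by
          refine Finset.sum_congr rfl fun i _ => ?_
          rw [hb i, real_inner_smul_left, real_inner_smul_right, hbself i]; ring
  -- the curvature quadratic form in terms of eigenvalues
  have hcq : curvQuad R η = ∑ i, ∑ j, (lam i * lam j) * K i j := by
    rw [curvQuad]
    calc ∑ i, ∑ j, (∑ k, ⟪η (R (e k) (e i) (e j)), e k⟫) * ⟪η (e i), e j⟫
        = ∑ i, ∑ k, ⟪R (η (e i)) (η (e k)) (e k), e i⟫ := by
          refine Finset.sum_congr rfl fun i _ => ?_
          simp_rw [Finset.sum_mul]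
          rw [Finset.sum_comm]
          refine Finset.sum_congr rfl fun k _ => ?_
          have hterm : ∀ j, ⟪η (R (e k) (e i) (e j)), e k⟫ * ⟪η (e i), e j⟫
              = ⟪(LinearMap.adjoint (slot1 R (η (e k)) (e k))) (e i), e j⟫ * ⟪e j, η (e i)⟫ := by
            intro j
            rw [hηsymm, hpair (e k) (e i) (e j) (η (e k)), real_inner_comm (η (e i))]
            congr 1
            rw [real_inner_comm, ← slot1_apply R (η (e k)) (e k) (e j),
              LinearMap.adjoint_inner_left]
          simp_rw [hterm]
          rw [e.sum_inner_mul_inner, LinearMap.adjoint_inner_left]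
          exact real_inner_comm _ _
      _ = ∑ k, ∑ i, ⟪R (η (b i)) (η (e k)) (e k), b i⟫ := by
          rw [Finset.sum_comm]
          refine Finset.sum_congr rfl fun k _ => ?_
          have h := sum_inner_map_eq e b ((slot1 R (η (e k)) (e k)) ∘ₗ η) (LinearMap.id)
          simpa using h
      _ = ∑ i, ∑ k, ⟪R (η (b i)) (η (b k)) (b k), b i⟫ := by
          rw [Finset.sum_comm]
          refine Finset.sum_congr rfl fun i _ => ?_
          have h1 : ∀ k, ⟪R (η (b i)) (η (e k)) (e k), b i⟫
              = ⟪(slot1 R (b i) (η (b i))) (e k), η (e k)⟫ := by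
            intro k
            rw [hpair (η (b i)) (η (e k)) (e k) (b i)]
            rfl
          have h2 : ∀ k, ⟪R (η (b i)) (η (b k)) (b k), b i⟫
              = ⟪(slot1 R (b i) (η (b i))) (b k), η (b k)⟫ := by
            intro k
            rw [hpair (η (b i)) (η (b k)) (b k) (b i)]
            rfl
          simp_rw [h1, h2]
          exact sum_inner_map_eq e b (slot1 R (b i) (η (b i))) η
      _ = ∑ i, ∑ j, (lam i * lam j) * K i j := by
          refine Finset.sum_congr rfl fun i _ => Finset.sum_congr rfl fun j _ => ?_
          rw [hb i, hb j, map_smul, map_smul]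
          simp only [LinearMap.smul_apply, map_smul, real_inner_smul_left, hKdef]
          ring
  rw [hcq, hns]
  exact fujitani_algebra n μ Kmin Kmax K lam hK0 hKs hmin hmax hrow hl
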